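/- Let α' = (α₁ repeated p times, β, αₙ repeated n-p-1 times) be nonincreasing with α₁ > β > αₙ ≥ 0 or αₙ ≤ β ≤ α₁, even sum, and α₁ ≤ n-1. If the Erdős–Gallai inequalities hold at k = p and k = p + 1, then α' is graphic. -/

import Mathlib

def IsGraphic {n : ℕ} (d : Fin n → ℕ) : Prop :=
  ∃ (G : SimpleGraph (Fin n)) (_ : DecidableRel G.Adj), ∀ i, G.degree i = d i

def ErdosGallaiIneq {n : ℕ} (α : Fin n → ℕ) (k : ℕ) : Prop :=
  ∑ i ∈ Finset.univ.filter (fun i : Fin n => (i : ℕ) < k), α i ≤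
    k * (k - 1) + ∑ i ∈ Finset.univ.filter (fun i : Fin n => k ≤ (i : ℕ)), min k (α i)

/-!
Choudum's proof of the Erdős–Gallai theorem, by induction on the degree sum: if a nonincreasing
sequence satisfies all Erdős–Gallai inequalities, lowering by one its last positive term `d t` and
the last term `d s` (`s < t`) equal to its maximum gives a sequence that still satisfies them.
A realization of the lowered sequence can be 2-switched so that `s` and `t` are nonadjacent, and
adding the edge `st` then realizes the original sequence.

For the three-valued sequence, the inequalities at `k ≤ p` follow from the one at `p`: when
`k ≤ α₁` the right-hand side minus the left-hand side, divided by `k`, can only grow as `k`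
decreases, because `k ↦ min k x` is concave; when `k > α₁` they hold trivially. The inequalities
at `k > p + 1` follow one step at a time from the one at `p + 1`, because the tail is constant and
`αₙ ≤ n - 1`.
-/

open Finset Function

namespace SimpleGraph

variable {V : Type*} [Fintype V] {G H : SimpleGraph V} [DecidableRel G.Adj] [DecidableRel H.Adj]

lemma degree_sup_of_disjoint (h : Disjoint G H) (v : V) :
    (G ⊔ H).degree v = G.degree v + H.degree v := by
  simp only [← card_neighborFinset_eq_degree, neighborFinset_sup_of_disjoint v h, card_disjUnion]

lemma degree_sdiff_add_degree_of_le (h : H ≤ G) (v : V) :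
    (G \ H).degree v + H.degree v = G.degree v := by
  classical
  simp only [← card_neighborFinset_eq_degree, neighborFinset_sdiff]
  exact card_sdiff_add_card_eq_card fun w hw => by simpa using h (by simpa using hw)

lemma degree_sdiff_sup_of_degree_eq {K : SimpleGraph V} [DecidableRel K.Adj] (hH : H ≤ G)
    (hK : Disjoint G K) (hdeg : ∀ v, H.degree v = K.degree v) (v : V) :
    (G \ H ⊔ K).degree v = G.degree v := by
  rw [degree_sup_of_disjoint (hK.mono_left sdiff_le), ← hdeg,
    degree_sdiff_add_degree_of_le hH]

variable [DecidableEq V]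

lemma degree_edge {x y : V} (hxy : x ≠ y) (v : V) :
    (edge x y).degree v = if v = x ∨ v = y then 1 else 0 := by
  rw [← card_neighborFinset_eq_degree]
  split_ifs with hv
  · rw [card_eq_one]
    rcases hv with rfl | rfl
    · exact ⟨y, by ext; simp [edge_adj]; grind⟩
    · exact ⟨x, by ext; simp [edge_adj]; grind⟩
  · rw [card_eq_zero]
    ext; simp [edge_adj]; grind

lemma degree_sup_edge {x y : V} (hxy : x ≠ y) (h : ¬G.Adj x y) (v : V) :
    (G ⊔ edge x y).degree v = G.degree v + if v = x ∨ v = y then 1 else 0 := by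
  rw [degree_sup_of_disjoint ((disjoint_edge _).2 h), degree_edge hxy]

lemma degree_edge_sup_edge_eq {x y u w : V} (hxy : x ≠ y) (hxu : x ≠ u) (hxw : x ≠ w)
    (hyu : y ≠ u) (hyw : y ≠ w) (huw : u ≠ w) (v : V) :
    (edge x y ⊔ edge u w).degree v = (edge x u ⊔ edge y w).degree v := by
  rw [degree_sup_of_disjoint ((disjoint_edge _).2 (by simp [edge_adj]; grind)),
    degree_sup_of_disjoint ((disjoint_edge _).2 (by simp [edge_adj]; grind)),
    degree_edge hxy, degree_edge huw, degree_edge hxu, degree_edge hyw]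
  split_ifs <;> grind

lemma exists_adj_not_adj_of_degree_le {x y u : V} (hxu : x ≠ u) (hxy : G.Adj x y)
    (hnxu : ¬G.Adj x u) (hdeg : G.degree y ≤ G.degree u) :
    ∃ w, G.Adj u w ∧ ¬G.Adj y w ∧ y ≠ w := by
  have hx : x ∈ G.neighborFinset y := by simpa using hxy.symm
  have hy : #((G.neighborFinset y).erase x) + 1 = G.degree y := by
    rw [card_erase_add_one hx, card_neighborFinset_eq_degree]
  have hcard : #(((G.neighborFinset y).erase x).erase u) < #((G.neighborFinset u).erase y) := by
    by_cases huy : G.Adj u y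
    · have h1 := card_erase_add_one (s := (G.neighborFinset y).erase x) (a := u)
        (by simpa [Ne.symm hxu] using huy.symm)
      have h2 := card_erase_add_one (s := G.neighborFinset u) (a := y) (by simpa using huy)
      rw [card_neighborFinset_eq_degree] at h2
      omega
    · have h1 := card_erase_le (s := (G.neighborFinset y).erase x) (a := u)
      rw [erase_eq_of_notMem (s := G.neighborFinset u) (by simpa using huy),
        card_neighborFinset_eq_degree]
      omega
  obtain ⟨w, hwu, hwy⟩ := exists_mem_notMem_of_card_lt_card hcard
  simp only [mem_erase, mem_neighborFinset] at hwu hwy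
  refine ⟨w, hwu.2, fun hyw => hwy ⟨?_, ?_, hyw⟩, Ne.symm hwu.1⟩
  · rintro rfl; exact G.irrefl hwu.2
  · rintro rfl; exact hnxu hwu.2.symm

lemma exists_degree_eq_not_adj {x y : V} (A : Finset V)
    (hA : ∀ u ∈ A, u ≠ x ∧ u ≠ y ∧ G.degree y ≤ G.degree u) (hcard : G.degree x ≤ #A) :
    ∃ (G' : SimpleGraph V) (_ : DecidableRel G'.Adj),
      (∀ v, G'.degree v = G.degree v) ∧ ¬G'.Adj x y := by
  by_cases hxy : G.Adj x y
  swap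
  · exact ⟨G, inferInstance, fun _ => rfl, hxy⟩
  have hlt : #((G.neighborFinset x).erase y) < #A := by
    rw [card_erase_of_mem (by simpa using hxy), card_neighborFinset_eq_degree]
    have := (G.degree_pos_iff_exists_adj x).2 ⟨y, hxy⟩
    omega
  obtain ⟨u, huA, hux'⟩ := exists_mem_notMem_of_card_lt_card hlt
  obtain ⟨hux, huy, hdeg⟩ := hA u huA
  have hnxu : ¬G.Adj x u := fun h => hux' (by simp [huy, h])
  obtain ⟨w, huw, hnyw, hyw⟩ := exists_adj_not_adj_of_degree_le (Ne.symm hux) hxy hnxu hdeg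
  have hxw : x ≠ w := by rintro rfl; exact hnxu huw.symm
  -- the 2-switch replacing the edges `xy`, `uw` by the non-edges `xu`, `yw`
  refine ⟨G \ (edge x y ⊔ edge u w) ⊔ (edge x u ⊔ edge y w), inferInstance,
    degree_sdiff_sup_of_degree_eq
      (sup_le ((edge_le_iff _).2 (Or.inr hxy)) ((edge_le_iff _).2 (Or.inr huw)))
      (disjoint_sup_right.2 ⟨(disjoint_edge _).2 hnxu, (disjoint_edge _).2 hnyw⟩)
      (degree_edge_sup_edge_eq hxy.ne (Ne.symm hux) hxw (Ne.symm huy) hyw huw.ne), ?_⟩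
  simp [edge_adj, hxy.ne]
  grind

end SimpleGraph

lemma IsGraphic.add_edge {n : ℕ} {e : Fin n → ℕ} (he : IsGraphic e) {x y : Fin n} (hxy : x ≠ y)
    (A : Finset (Fin n)) (hA : ∀ u ∈ A, u ≠ x ∧ u ≠ y ∧ e y ≤ e u) (hcard : e x ≤ #A) :
    IsGraphic fun i => e i + if i = x ∨ i = y then 1 else 0 := by
  obtain ⟨G, _, hG⟩ := he
  obtain ⟨G', _, hG', hnxy⟩ := G.exists_degree_eq_not_adj A (by simpa [hG] using hA)
    (by simpa [hG] using hcard)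
  exact ⟨G' ⊔ SimpleGraph.edge x y, inferInstance, fun v => by
    rw [SimpleGraph.degree_sup_edge hxy hnxy, hG', hG]⟩

-- Indexing by `ℕ` instead of `Fin n` lets the sums be split at arbitrary indices.
def ErdosGallaiAt (n : ℕ) (D : ℕ → ℕ) (k : ℕ) : Prop :=
  ∑ i ∈ range k, D i ≤ k * (k - 1) + ∑ i ∈ Ico k n, min k (D i)

def decAt (D : ℕ → ℕ) (j : ℕ) : ℕ → ℕ := update D j (D j - 1)

@[simp]
lemma decAt_self (D : ℕ → ℕ) (j : ℕ) : decAt D j j = D j - 1 := update_self ..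

lemma decAt_of_ne {D : ℕ → ℕ} {i j : ℕ} (h : i ≠ j) : decAt D j i = D i := update_of_ne h ..

lemma erdosGallaiIneq_iff {n k : ℕ} (D : ℕ → ℕ) (hk : k ≤ n) :
    ErdosGallaiIneq (fun i : Fin n => D i) k ↔ ErdosGallaiAt n D k := by
  have hsum : ∀ (P : ℕ → Prop) [DecidablePred P] (f : ℕ → ℕ),
      ∑ i ∈ univ.filter (fun i : Fin n => P i), f i = ∑ i ∈ (range n).filter P, f i := by
    intro P _ f
    rw [sum_filter, sum_filter, Fin.sum_univ_eq_sum_range (fun i => if P i then f i else 0)]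
  have hlt : (range n).filter (· < k) = range k := by ext; simp; omega
  have hge : (range n).filter (k ≤ ·) = Ico k n := by ext; simp; omega
  rw [ErdosGallaiIneq, ErdosGallaiAt, hsum (· < k), hsum (k ≤ ·) (fun i => min k (D i)), hlt, hge]

lemma sum_add_ite_eq_of_add_ite_eq {ι M : Type*} [DecidableEq ι] [AddCommMonoid M]
    {s : Finset ι} {f g : ι → M} {j : ι} {c : M} (h : ∀ i, f i + (if i = j then c else 0) = g i) :
    ∑ i ∈ s, f i + (if j ∈ s then c else 0) = ∑ i ∈ s, g i := by
  rw [← sum_ite_eq' s j (fun _ => c), ← sum_add_distrib]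
  exact sum_congr rfl fun i _ => h i

section decAt

variable {D : ℕ → ℕ} {j : ℕ}

lemma sum_decAt (s : Finset ℕ) (hj : 1 ≤ D j) :
    ∑ i ∈ s, decAt D j i + (if j ∈ s then 1 else 0) = ∑ i ∈ s, D i :=
  sum_add_ite_eq_of_add_ite_eq fun i => by
    rcases eq_or_ne i j with rfl | h
    · simp; omega
    · simp [decAt_of_ne h, h]

lemma sum_min_decAt (s : Finset ℕ) (hj : 1 ≤ D j) (k : ℕ) :
    ∑ i ∈ s, min k (decAt D j i) + (if j ∈ s ∧ D j ≤ k then 1 else 0) = ∑ i ∈ s, min k (D i) := by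
  rw [ite_and]
  refine sum_add_ite_eq_of_add_ite_eq fun i => ?_
  rcases eq_or_ne i j with rfl | h
  · simp only [decAt_self, if_true]
    split_ifs <;> omega
  · simp [decAt_of_ne h, h]

lemma AntitoneOn.decAt {S : Set ℕ} (hD : AntitoneOn D S) (hj : ∀ i ∈ S, j < i → D i < D j) :
    AntitoneOn (decAt D j) S := by
  intro a ha b hb hab
  simp only [_root_.decAt, update_apply]
  have := hD ha hb hab
  split_ifs with hb' ha' ha'
  · omega
  · subst hb'; omega
  · subst ha'; have := hj b hb (lt_of_le_of_ne hab (Ne.symm hb')); omega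
  · exact this

end decAt

lemma sum_min_succ (s : Finset ℕ) (D : ℕ → ℕ) (k : ℕ) :
    ∑ i ∈ s, min (k + 1) (D i) = ∑ i ∈ s, min k (D i) + #{i ∈ s | k + 1 ≤ D i} := by
  rw [card_filter, ← sum_add_distrib]
  exact sum_congr rfl fun i _ => by split_ifs <;> omega

lemma sum_range_eq_mul {D : ℕ → ℕ} {j c : ℕ} (h : ∀ i < j, D i = c) :
    ∑ i ∈ range j, D i = j * c := by
  rw [sum_const_nat fun i hi => h i (mem_range.1 hi), card_range]

lemma mul_min_le_mul_min {k p : ℕ} (hkp : k ≤ p) (x : ℕ) : k * min p x ≤ p * min k x := by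
  rcases le_total x k with hxk | hkx
  · rw [min_eq_right (hxk.trans hkp), min_eq_right hxk]
    exact Nat.mul_le_mul_right x hkp
  · rw [min_eq_left hkx, Nat.mul_comm p k]
    exact Nat.mul_le_mul_left k (min_le_left p x)

namespace ErdosGallaiAt

variable {n : ℕ} {D : ℕ → ℕ} {k : ℕ}

lemma succ (hk : k < n) (hEG : ErdosGallaiAt n D k)
    (hDk : D k ≤ k + #{i ∈ Ico (k + 1) n | k + 1 ≤ D i}) : ErdosGallaiAt n D (k + 1) := by
  unfold ErdosGallaiAt at *
  rw [sum_eq_sum_Ico_succ_bot hk] at hEG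
  rw [sum_range_succ, sum_min_succ, Nat.add_sub_cancel]
  have : k * (k - 1) + 2 * k = (k + 1) * k := by cases k <;> simp; ring
  have := min_le_left k (D k)
  omega

lemma of_le_self (hk : k < n) (hle : ∀ i < k, D i ≤ D k) (hDk : D k ≤ k) :
    ErdosGallaiAt n D k := by
  have hL : ∑ i ∈ range k, D i ≤ k * D k := by
    simpa using sum_le_card_nsmul (range k) D (D k) fun i hi => hle i (mem_range.1 hi)
  have hR : D k ≤ ∑ i ∈ Ico k n, min k (D i) := by
    simpa [min_eq_right hDk] using
      single_le_sum (f := fun i => min k (D i)) (fun _ _ => Nat.zero_le _) (left_mem_Ico.2 hk)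
  have : k * D k ≤ k * (k - 1) + D k := by
    rcases k with _ | k
    · simp
    · simp only [Nat.add_sub_cancel, Nat.succ_mul]
      exact Nat.add_le_add_right (Nat.mul_le_mul_left k hDk) _
  unfold ErdosGallaiAt
  omega

lemma of_le_of_const {p c : ℕ} (hEG : ErdosGallaiAt n D p) (hpn : p ≤ n)
    (hconst : ∀ i < p, D i = c) (hkp : k ≤ p) (hkc : k ≤ c) : ErdosGallaiAt n D k := by
  unfold ErdosGallaiAt at *
  set T := fun j => ∑ i ∈ Ico p n, min j (D i)
  have hR : ∑ i ∈ Ico k n, min k (D i) = (p - k) * k + T k := by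
    rw [← sum_Ico_consecutive _ hkp hpn, sum_const_nat fun i hi => by
      rw [hconst i (mem_Ico.1 hi).2, min_eq_left hkc], Nat.card_Ico]
  have hT : k * T p ≤ p * T k := by
    simp only [T, mul_sum]
    exact sum_le_sum fun i _ => mul_min_le_mul_min hkp (D i)
  have hkp1 : k * (k - 1) + (p - k) * k = k * (p - 1) := by
    obtain ⟨m, rfl⟩ := Nat.exists_eq_add_of_le hkp
    cases k <;> simp; ring
  rw [sum_range_eq_mul hconst] at hEG
  rw [sum_range_eq_mul fun i hi => hconst i (by omega), hR, ← add_assoc, hkp1]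
  rcases Nat.eq_zero_or_pos p with rfl | hp
  · simp [show k = 0 by omega]
  refine Nat.le_of_mul_le_mul_left ?_ hp
  calc p * (k * c) = k * (p * c) := by ring
    _ ≤ k * (p * (p - 1) + T p) := Nat.mul_le_mul_left k hEG
    _ ≤ k * (p * (p - 1)) + p * T k := by rw [mul_add]; exact Nat.add_le_add_left hT _
    _ = p * (k * (p - 1) + T k) := by ring

lemma of_const_tail {m c : ℕ} (hEG : ErdosGallaiAt n D m)
    (hconst : ∀ i, m ≤ i → i < n → D i = c) (hc : c < n) (hmk : m ≤ k) (hkn : k ≤ n) :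
    ErdosGallaiAt n D k := by
  induction k, hmk using Nat.le_induction with
  | base => exact hEG
  | succ k hmk ih =>
    refine (ih (by omega)).succ (by omega) ?_
    rw [hconst k hmk (by omega)]
    by_cases hck : c ≤ k
    · omega
    · have hall : #{i ∈ Ico (k + 1) n | k + 1 ≤ D i} = n - (k + 1) := by
        rw [filter_true_of_mem fun i hi => by
          rw [mem_Ico] at hi; rw [hconst i (by omega) hi.2]; omega, Nat.card_Ico]
      omega

lemma sum_range_lt_of_succ (hEG : ErdosGallaiAt n D (k + 1)) (hconst : ∀ i ≤ k, D i = D k)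
    (hk : k < D k) {t : ℕ} (ht : t ∈ Ico (k + 1) n) (ht1 : 1 ≤ D t) (htk : D t ≤ k) :
    ∑ i ∈ range k, D i < k * (k - 1) + ∑ i ∈ Ico k n, min k (D i) := by
  have hkn : k < n := by rw [mem_Ico] at ht; omega
  have hL : ∑ i ∈ range k, D i = k * D k := sum_range_eq_mul fun i hi => hconst i hi.le
  unfold ErdosGallaiAt at hEG
  rw [sum_range_succ, hL, sum_min_succ, Nat.add_sub_cancel] at hEG
  rw [hL, sum_eq_sum_Ico_succ_bot hkn, min_eq_left hk.le]
  set C := #{i ∈ Ico (k + 1) n | k + 1 ≤ D i}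
  set R := ∑ i ∈ Ico (k + 1) n, min k (D i)
  -- the terms counted by `C` contribute `k` each to `R`, and `D t` contributes at least `1`
  have hRC : k * C + 1 ≤ R := calc
    k * C + 1 = ∑ i ∈ Ico (k + 1) n,
        (k * (if k + 1 ≤ D i then 1 else 0) + if i = t then 1 else 0) := by
      rw [sum_add_distrib, ← mul_sum, ← card_filter, sum_ite_eq', if_pos ht]
    _ ≤ R := sum_le_sum fun i _ => by split_ifs <;> subst_vars <;> omega
  have hkk : k * (k - 1) + k = k * k := by cases k <;> simp; ring
  have hk1 : (k + 1) * k = k * k + k := by ring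
  by_contra! h
  have hDk : D k ≤ k + C := by nlinarith
  have := Nat.mul_le_mul_left k hDk
  nlinarith

lemma add_two_le_sum_min_of_even (hD : AntitoneOn D (Set.Iio n))
    (heven : Even (∑ i ∈ range n, D i)) (hconst : ∀ i ≤ k, D i = k) {t : ℕ}
    (ht : t ∈ Ico (k + 1) n) (ht1 : 1 ≤ D t) : k + 2 ≤ ∑ i ∈ Ico k n, min k (D i) := by
  rw [mem_Ico] at ht
  have hmin : ∑ i ∈ Ico k n, min k (D i) = k + ∑ i ∈ Ico (k + 1) n, D i := by
    rw [sum_eq_sum_Ico_succ_bot (by omega), hconst k le_rfl, min_self]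
    refine congrArg _ (sum_congr rfl fun i hi => min_eq_right ?_)
    rw [← hconst 0 (Nat.zero_le k)]
    exact hD (show 0 < n by omega) (show i < n from (mem_Ico.1 hi).2) (Nat.zero_le i)
  -- the first `k + 1` terms sum to the even number `(k + 1) * k`
  rw [← sum_range_add_sum_Ico _ (show k + 1 ≤ n by omega),
    sum_range_eq_mul fun i hi => hconst i (by omega), Nat.mul_comm] at heven
  obtain ⟨r, hr⟩ := (Nat.even_add.1 heven).1 (Nat.even_mul_succ_self k)
  have := single_le_sum (f := D) (fun _ _ => Nat.zero_le _) (mem_Ico.2 ht)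
  omega

theorem decAt_decAt {s t : ℕ} (hD : AntitoneOn D (Set.Iio n)) (hst : s < t) (htn : t < n)
    (ht : 1 ≤ D t) (hs : ∀ i ≤ s, D i = D 0) (heven : Even (∑ i ∈ range n, D i))
    (hEG : ∀ k ≤ n, ErdosGallaiAt n D k) (hk : k ≤ n) :
    ErdosGallaiAt n (decAt (decAt D t) s) k := by
  have hDt : D t ≤ D 0 := hD (show 0 < n by omega) htn (Nat.zero_le t)
  have hDs : decAt D t s = D 0 := by rw [decAt_of_ne hst.ne, hs s le_rfl]
  have hL := sum_decAt (range k) (show 1 ≤ decAt D t s by omega)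
  have hL' := sum_decAt (range k) ht
  have hR := sum_min_decAt (Ico k n) (show 1 ≤ decAt D t s by omega) k
  have hR' := sum_min_decAt (Ico k n) ht k
  simp only [mem_range, mem_Ico, hDs] at hL hL' hR hR'
  have hEGk := hEG k hk
  unfold ErdosGallaiAt at hEGk ⊢
  rcases lt_or_ge s k with hsk | hks
  -- for `s < k` the left-hand side drops by at least as much as the right-hand side
  · split_ifs at hL hL' hR hR' <;> omega
  -- now the first `k` terms are untouched and all equal to `D 0`
  have hLk : ∑ i ∈ range k, D i = k * D 0 := sum_range_eq_mul fun i hi => hs i (by omega)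
  rw [if_neg (by omega)] at hL hL'
  rcases lt_trichotomy (D 0) k with h0k | h0k | h0k
  · have := Nat.mul_le_mul_left k (show D 0 ≤ k - 1 by omega)
    omega
  · have h2 := add_two_le_sum_min_of_even hD heven (fun i hi => (hs i (by omega)).trans h0k)
      (show t ∈ Ico (k + 1) n by simp; omega) ht
    have hkk : k * (k - 1) + k = k * k := by cases k <;> simp; ring
    rw [if_pos (by omega)] at hR hR'
    rw [h0k] at hLk
    omega
  -- if lowering `D t` costs one on the right-hand side, the inequality at `k` was strict
  · by_cases htk : D t ≤ k
    · have := (hEG (k + 1) (by omega)).sum_range_lt_of_succ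
        (fun i hi => (hs i (by omega)).trans (hs k hks).symm) (by rw [hs k hks]; omega)
        (show t ∈ Ico (k + 1) n by simp; omega) ht htk
      rw [if_neg (by omega)] at hR
      rw [if_pos (by omega)] at hR'
      omega
    · rw [if_neg (by omega)] at hR hR'
      omega

lemma le_of_one {t : ℕ} (hEG : ErdosGallaiAt n D 1) (htn : t < n)
    (hzero : ∀ i, t < i → i < n → D i = 0) : D 0 ≤ t := by
  unfold ErdosGallaiAt at hEG
  rw [sum_range_one, ← sum_subset (Ico_subset_Ico_right (show t + 1 ≤ n by omega))
    fun i hi hi' => by simp at hi hi'; rw [hzero i (by omega) (by omega)]; rfl] at hEG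
  have := sum_le_card_nsmul (Ico 1 (t + 1)) (fun i => min 1 (D i)) 1 fun _ _ => min_le_left _ _
  rw [smul_eq_mul, mul_one, Nat.card_Ico] at this
  omega

end ErdosGallaiAt

lemma antitoneOn_decAt_decAt {n s t : ℕ} {D : ℕ → ℕ} (hD : AntitoneOn D (Set.Iio n))
    (hst : s < t) (htn : t < n) (ht : 1 ≤ D t) (hzero : ∀ i, t < i → i < n → D i = 0)
    (hs : D s = D 0)
    (hsmax : ∀ i, s < i → i < t → D i < D 0) : AntitoneOn (decAt (decAt D t) s) (Set.Iio n) := by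
  have hDt : D t ≤ D 0 := hD (show 0 < n by omega) htn (Nat.zero_le t)
  refine (hD.decAt fun i hi hti => ?_).decAt fun i hi hsi => ?_
  · rw [hzero i hti hi]; omega
  · rw [decAt_of_ne hst.ne, hs]
    rcases lt_trichotomy i t with hit | rfl | hti
    · rw [decAt_of_ne hit.ne]; exact hsmax i hsi hit
    · rw [decAt_self]; omega
    · rw [decAt_of_ne hti.ne', hzero i hti hi]; omega

lemma IsGraphic.of_decAt_decAt {n s t : ℕ} {D : ℕ → ℕ} (hD : AntitoneOn D (Set.Iio n))
    (hst : s < t) (htn : t < n) (ht : 1 ≤ D t) (hs : D s = D 0) (hD0t : D 0 ≤ t)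
    (hE : IsGraphic fun i : Fin n => decAt (decAt D t) s i) : IsGraphic fun i : Fin n => D i := by
  have hDt : D t ≤ D 0 := hD (show 0 < n by omega) htn (Nat.zero_le t)
  let s' : Fin n := ⟨s, by omega⟩
  let t' : Fin n := ⟨t, htn⟩
  -- the `t - 1` vertices before `t` other than `s` have degree at least `D t`
  have key := hE.add_edge (x := s') (y := t') (Fin.ne_of_val_ne hst.ne)
    (({i : Fin n | i < t} : Finset (Fin n)).erase s') (fun u hu => by
      simp only [mem_erase, mem_filter, mem_univ, true_and, ne_eq, Fin.ext_iff] at hu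
      refine ⟨Fin.ne_of_val_ne hu.1, Fin.ne_of_val_ne (show (u : ℕ) ≠ t by omega), ?_⟩
      simp only [s', t', decAt_self, decAt_of_ne hst.ne', decAt_of_ne hu.1,
        decAt_of_ne (show (u : ℕ) ≠ t by omega)]
      have := hD (show (u : ℕ) < n from u.isLt) htn hu.2.le
      omega)
    (by
      rw [card_erase_of_mem (by simp [s']; omega), Fin.card_filter_val_lt]
      simp only [s', decAt_self, decAt_of_ne hst.ne, hs]
      omega)
  convert key using 2 with i
  by_cases his : (i : ℕ) = s
  · simp [s', t', Fin.ext_iff, his, decAt_of_ne hst.ne, hs]; omega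
  by_cases hit : (i : ℕ) = t
  · simp [s', t', Fin.ext_iff, hit, decAt_of_ne hst.ne']; omega
  · simp [s', t', Fin.ext_iff, his, hit, decAt_of_ne his, decAt_of_ne hit]

theorem isGraphic_of_erdosGallaiAt {n : ℕ} (D : ℕ → ℕ) (hD : AntitoneOn D (Set.Iio n))
    (heven : Even (∑ i ∈ range n, D i)) (hEG : ∀ k ≤ n, ErdosGallaiAt n D k) :
    IsGraphic fun i : Fin n => D i := by
  induction hsum : ∑ i ∈ range n, D i using Nat.strong_induction_on generalizing D with
  | _ m ih =>
  by_cases hpos : ∃ i < n, 1 ≤ D i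
  swap
  · simp only [not_exists, not_and, not_le] at hpos
    exact ⟨⊥, inferInstance, fun i => by have := hpos i i.isLt; simp; omega⟩
  obtain ⟨i₀, hi₀n, hi₀⟩ := hpos
  have hDle : ∀ i < n, D i ≤ D 0 := fun i hi => hD (show 0 < n by omega) hi (Nat.zero_le i)
  set t := Nat.findGreatest (fun i => 1 ≤ D i) (n - 1)
  have ht : 1 ≤ D t := Nat.findGreatest_spec (P := fun i => 1 ≤ D i) (show i₀ ≤ n - 1 by omega) hi₀
  have htn : t < n := (Nat.findGreatest_le _).trans_lt (by omega)
  have hzero : ∀ i, t < i → i < n → D i = 0 := fun i h₁ h₂ => by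
    have := Nat.findGreatest_is_greatest h₁ (by omega); omega
  have hD0t : D 0 ≤ t := (hEG 1 (by omega)).le_of_one htn hzero
  have hDt := hDle t htn
  set s := Nat.findGreatest (fun i => D i = D 0) (t - 1)
  have hst : s < t := (Nat.findGreatest_le _).trans_lt (by omega)
  have hs0 : D s = D 0 := Nat.findGreatest_spec (P := fun i => D i = D 0) (Nat.zero_le _) rfl
  have hs : ∀ i ≤ s, D i = D 0 := fun i hi =>
    le_antisymm (hDle i (by omega)) (hs0 ▸ hD (show i < n by omega) (show s < n by omega) hi :)
  have hsmax : ∀ i, s < i → i < t → D i < D 0 := fun i h₁ h₂ => by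
    have := Nat.findGreatest_is_greatest h₁ (by omega); have := hDle i (by omega); omega
  have hsumE : ∑ i ∈ range n, decAt (decAt D t) s i + 2 = m := by
    have h₁ := sum_decAt (range n) (show 1 ≤ decAt D t s by rw [decAt_of_ne hst.ne]; omega)
    have h₂ := sum_decAt (range n) ht
    simp only [mem_range, if_pos htn, if_pos (hst.trans htn)] at h₁ h₂
    omega
  refine IsGraphic.of_decAt_decAt hD hst htn ht hs0 hD0t <| ih _ (by omega) _
    (antitoneOn_decAt_decAt hD hst htn ht hzero hs0 hsmax)
    ((Nat.even_add.1 (by rwa [hsumE, ← hsum])).2 even_two)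
    (fun k hk => ErdosGallaiAt.decAt_decAt hD hst htn ht hs heven hEG hk) rfl

/-- For the extremal sequence (`p` copies of `a1`, one `β`, then copies of `an`),
if the Erdős–Gallai inequalities hold at `k = p` and `k = p + 1`, then the
sequence is graphic. -/
theorem stmt_17 (n p a1 β an : ℕ) (hp : p + 1 ≤ n)
    (h1 : an ≤ β) (h2 : β ≤ a1) (hcap : a1 + 1 ≤ n)
    (α : Fin n → ℕ)
    (hdef : α = fun i : Fin n => if (i : ℕ) < p then a1 else if (i : ℕ) = p then β else an)
    (heven : Even (∑ i, α i))
    (hEGp : ErdosGallaiIneq α p) (hEGp1 : ErdosGallaiIneq α (p + 1)) :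
    IsGraphic α := by
  subst hdef
  set D : ℕ → ℕ := fun i => if i < p then a1 else if i = p then β else an
  have hanti : Antitone D := fun i j hij => by simp only [D]; split_ifs <;> omega
  have hhead : ∀ i < p, D i = a1 := fun i hi => if_pos hi
  have htail : ∀ i, p + 1 ≤ i → D i = an := fun i hi => by
    simp only [D]; rw [if_neg (by omega), if_neg (by omega)]
  replace hEGp := (erdosGallaiIneq_iff D (by omega)).1 hEGp
  replace hEGp1 := (erdosGallaiIneq_iff D hp).1 hEGp1
  refine isGraphic_of_erdosGallaiAt D (hanti.antitoneOn _)
    (by rw [← Fin.sum_univ_eq_sum_range]; exact heven) fun k hk => ?_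
  rcases le_or_gt k p with hkp | hpk
  · rcases le_or_gt k a1 with hka | hak
    · exact hEGp.of_le_of_const (by omega) hhead hkp hka
    · rcases hkp.eq_or_lt with rfl | hkp
      · exact hEGp
      · exact .of_le_self (by omega) (fun i hi => by rw [hhead i (by omega), hhead k hkp])
          (by rw [hhead k hkp]; omega)
  · exact hEGp1.of_const_tail (fun i hi _ => htail i hi) (by omega) hpk hk
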